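/- Under the angle-based ODRS update of nonzero opinion vectors x_1(k),…,x_n(k) ∈ [0,1]^m \ {0} with truncated cosine-similarity weights w_{ij} = s_{ij}/Σ_p s_{ip} (s_{ij} = sim(x_i,x_j) if sim(x_i,x_j) ≥ ε, else 0, for a threshold ε ∈ [0,1]) and x_i(k+1) = Σ_j w_{ij} x_j(k), the minimum pairwise cosine similarity is non-decreasing: for all i,j, sim(x_i(k+1), x_j(k+1)) ≥ min_{r,s ∈ {1,…,n}} sim(x_r(k), x_s(k)). -/

import Mathlib

open scoped RealInnerProductSpace

/-- Cosine similarity of two vectors in `ℝ^m`. -/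
noncomputable def cosSim {m : ℕ} (u v : EuclideanSpace ℝ (Fin m)) : ℝ :=
  ⟪u, v⟫ / (‖u‖ * ‖v‖)

/-!
Write `μ` for the minimum pairwise similarity, so `μ ‖x_p‖ ‖x_q‖ ≤ ⟪x_p, x_q⟫` for all `p, q`,
and `μ ≥ 0` because the opinions have non-negative coordinates. The weights are non-negative, so
expanding `⟪x'_i, x'_j⟫` bilinearly gives `⟪x'_i, x'_j⟫ ≥ μ (∑_p w_ip ‖x_p‖) (∑_q w_jq ‖x_q‖)`,
and the triangle inequality bounds these sums from below by `‖x'_i‖` and `‖x'_j‖`. The only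
other point is that `x'_i ≠ 0`, which holds because `w_ii > 0` and all inner products are
non-negative, so that `⟪x'_i, x_i⟫ ≥ w_ii ‖x_i‖² > 0`.
-/

open Finset

section InnerProductSpace

variable {E ι : Type*} [NormedAddCommGroup E] [InnerProductSpace ℝ E] [Fintype ι]

theorem inner_sum_smul_sum_smul (v : ι → E) (a b : ι → ℝ) :
    ⟪∑ p, a p • v p, ∑ q, b q • v q⟫ = ∑ p, ∑ q, a p * b q * ⟪v p, v q⟫ := by
  simp only [sum_inner, inner_sum, real_inner_smul_left, real_inner_smul_right]
  exact sum_comm.trans (sum_congr rfl fun p _ => sum_congr rfl fun q _ => by ring)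

theorem mul_sum_norm_le_inner_sum_smul {v : ι → E} {a b : ι → ℝ} {μ : ℝ}
    (ha : 0 ≤ a) (hb : 0 ≤ b) (hv : ∀ p q, μ * (‖v p‖ * ‖v q‖) ≤ ⟪v p, v q⟫) :
    μ * ((∑ p, a p * ‖v p‖) * ∑ q, b q * ‖v q‖) ≤ ⟪∑ p, a p • v p, ∑ q, b q • v q⟫ := by
  have hexpand : μ * ((∑ p, a p * ‖v p‖) * ∑ q, b q * ‖v q‖)
      = ∑ p, ∑ q, a p * b q * (μ * (‖v p‖ * ‖v q‖)) := by
    rw [sum_mul_sum, mul_sum]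
    exact sum_congr rfl fun p _ => by rw [mul_sum]; exact sum_congr rfl fun q _ => by ring
  rw [hexpand, inner_sum_smul_sum_smul]
  exact sum_le_sum fun p _ => sum_le_sum fun q _ =>
    mul_le_mul_of_nonneg_left (hv p q) (mul_nonneg (ha p) (hb q))

theorem norm_sum_smul_le {v : ι → E} {a : ι → ℝ} (ha : 0 ≤ a) :
    ‖∑ p, a p • v p‖ ≤ ∑ p, a p * ‖v p‖ :=
  (norm_sum_le _ _).trans_eq <| sum_congr rfl fun p _ => by
    rw [norm_smul, Real.norm_of_nonneg (ha p)]

theorem mul_norm_mul_norm_le_inner_sum_smul {v : ι → E} {a b : ι → ℝ} {μ : ℝ} (hμ : 0 ≤ μ)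
    (ha : 0 ≤ a) (hb : 0 ≤ b) (hv : ∀ p q, μ * (‖v p‖ * ‖v q‖) ≤ ⟪v p, v q⟫) :
    μ * (‖∑ p, a p • v p‖ * ‖∑ q, b q • v q‖) ≤ ⟪∑ p, a p • v p, ∑ q, b q • v q⟫ := by
  refine le_trans ?_ (mul_sum_norm_le_inner_sum_smul ha hb hv)
  gcongr
  · exact sum_nonneg fun p _ => mul_nonneg (ha p) (norm_nonneg _)
  · exact norm_sum_smul_le ha
  · exact norm_sum_smul_le hb

theorem sum_smul_ne_zero_of_inner_nonneg {v : ι → E} {a : ι → ℝ} (ha : 0 ≤ a)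
    (hv : ∀ p q, 0 ≤ ⟪v p, v q⟫) {i : ι} (hai : 0 < a i) (hvi : v i ≠ 0) :
    ∑ p, a p • v p ≠ 0 := by
  have hpos : 0 < ⟪∑ p, a p • v p, v i⟫ := by
    rw [sum_inner]
    refine sum_pos' (fun p _ => ?_) ⟨i, mem_univ i, ?_⟩
    · rw [real_inner_smul_left]; exact mul_nonneg (ha p) (hv p i)
    · rw [real_inner_smul_left]; exact mul_pos hai (real_inner_self_pos.2 hvi)
  intro h
  rw [h, inner_zero_left] at hpos
  exact hpos.false

end InnerProductSpace

theorem EuclideanSpace.inner_nonneg {ι : Type*} [Fintype ι] {u v : EuclideanSpace ℝ ι}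
    (hu : ∀ p, 0 ≤ u p) (hv : ∀ p, 0 ≤ v p) : 0 ≤ ⟪u, v⟫ := by
  rw [PiLp.inner_apply]
  exact sum_nonneg fun p _ => mul_nonneg (hv p) (hu p)

section CosSim

variable {m : ℕ}

theorem cosSim_self {u : EuclideanSpace ℝ (Fin m)} (hu : u ≠ 0) : cosSim u u = 1 := by
  rw [cosSim, real_inner_self_eq_norm_mul_norm, div_self]
  exact mul_ne_zero (norm_ne_zero_iff.2 hu) (norm_ne_zero_iff.2 hu)

theorem cosSim_nonneg {u v : EuclideanSpace ℝ (Fin m)} (h : 0 ≤ ⟪u, v⟫) : 0 ≤ cosSim u v :=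
  div_nonneg h (by positivity)

theorem le_cosSim_iff {u v : EuclideanSpace ℝ (Fin m)} (hu : u ≠ 0) (hv : v ≠ 0) {μ : ℝ} :
    μ ≤ cosSim u v ↔ μ * (‖u‖ * ‖v‖) ≤ ⟪u, v⟫ :=
  le_div_iff₀ (mul_pos (norm_pos_iff.2 hu) (norm_pos_iff.2 hv))

theorem le_cosSim_sum_smul {ι : Type*} [Fintype ι] {v : ι → EuclideanSpace ℝ (Fin m)}
    {a b : ι → ℝ} {μ : ℝ} (hμ : 0 ≤ μ) (ha : 0 ≤ a) (hb : 0 ≤ b) (hv0 : ∀ p, v p ≠ 0)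
    (hv : ∀ p q, μ ≤ cosSim (v p) (v q)) (hav : ∑ p, a p • v p ≠ 0)
    (hbv : ∑ q, b q • v q ≠ 0) :
    μ ≤ cosSim (∑ p, a p • v p) (∑ q, b q • v q) :=
  (le_cosSim_iff hav hbv).2 <| mul_norm_mul_norm_le_inner_sum_smul hμ ha hb fun p q =>
    (le_cosSim_iff (hv0 p) (hv0 q)).1 (hv p q)

end CosSim

theorem div_sum_nonneg {ι : Type*} [Fintype ι] {f : ι → ℝ} (hf : 0 ≤ f) (i : ι) :
    0 ≤ f i / ∑ p, f p :=
  div_nonneg (hf i) (sum_nonneg fun p _ => hf p)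

theorem div_sum_pos {ι : Type*} [Fintype ι] {f : ι → ℝ} (hf : 0 ≤ f) {i : ι} (hi : 0 < f i) :
    0 < f i / ∑ p, f p :=
  div_pos hi (hi.trans_le (single_le_sum (fun p _ => hf p) (mem_univ i)))

/-- **The minimum pairwise cosine similarity is non-decreasing under the angle-based ODRS
update.** Agents hold nonzero opinions `x i ∈ [0,1]^m \ {0}`. With threshold `ε ∈ [0,1]`,
set `s i j = sim(x i, x j)` if `sim(x i, x j) ≥ ε`, else `0`; normalize
`w i j = s i j / ∑ p, s i p` and update `x' i = ∑ j, w i j • x j`. Then for all `i, j`,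
`sim (x' i) (x' j) ≥ min_{r,s} sim (x r) (x s)`. -/
theorem odrs_angle_min_similarity_nondecreasing
    {n m : ℕ} [NeZero n]
    (ε : ℝ) (hε : ε ∈ Set.Icc (0 : ℝ) 1)
    (x : Fin n → EuclideanSpace ℝ (Fin m))
    (hx : ∀ i, ∀ p : Fin m, x i p ∈ Set.Icc (0 : ℝ) 1)
    (hx0 : ∀ i, x i ≠ 0)
    (s : Fin n → Fin n → ℝ)
    (hs : ∀ i j, s i j = if ε ≤ cosSim (x i) (x j) then cosSim (x i) (x j) else 0)
    (w : Fin n → Fin n → ℝ)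
    (hw : ∀ i j, w i j = s i j / ∑ p, s i p)
    (x' : Fin n → EuclideanSpace ℝ (Fin m))
    (hx' : ∀ i, x' i = ∑ j, w i j • x j) :
    ∀ i j, cosSim (x' i) (x' j) ≥
      Finset.univ.inf' Finset.univ_nonempty
        (fun p : Fin n × Fin n => cosSim (x p.1) (x p.2)) := by
  intro i j
  have hinner : ∀ p q, 0 ≤ ⟪x p, x q⟫ := fun p q =>
    EuclideanSpace.inner_nonneg (fun r => (hx p r).1) (fun r => (hx q r).1)
  have hs_nonneg : ∀ p, 0 ≤ s p := fun p q => by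
    rw [hs]; split_ifs
    exacts [cosSim_nonneg (hinner p q), le_rfl]
  have hs_self : ∀ p, s p p = 1 := fun p => by
    rw [hs, cosSim_self (hx0 p), if_pos hε.2]
  have hw_nonneg : ∀ p, 0 ≤ w p := fun p q => hw p q ▸ div_sum_nonneg (hs_nonneg p) q
  have hw_self : ∀ p, 0 < w p p := fun p =>
    hw p p ▸ div_sum_pos (hs_nonneg p) (hs_self p ▸ one_pos)
  have hx'0 : ∀ p, x' p ≠ 0 := fun p =>
    hx' p ▸ sum_smul_ne_zero_of_inner_nonneg (hw_nonneg p) hinner (hw_self p) (hx0 p)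
  rw [ge_iff_le, hx' i, hx' j]
  refine le_cosSim_sum_smul ?_ (hw_nonneg i) (hw_nonneg j) hx0
    (fun p q => inf'_le _ (mem_univ (p, q))) (hx' i ▸ hx'0 i) (hx' j ▸ hx'0 j)
  exact le_inf' _ _ fun p _ => cosSim_nonneg (hinner p.1 p.2)
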